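/- Let V be a quaternionic Hermitian vector space and let η be an SU(2)-invariant alternating bilinear form on V. Let A be the endomorphism of V determined by ⟨A x, y⟩ = η(x, y) for all x, y ∈ V. Then the endomorphism I∘A is self-adjoint, and its eigenvalues occur in pairs σ, −σ: for every real number μ, μ is an eigenvalue of I∘A if and only if −μ is an eigenvalue of I∘A. -/

import Mathlib

open RealInnerProductSpace

/-!
Since `I` is an isometry with `I² = -1` it is skew-adjoint, and `I`-invariance of `η` gives
`η (I x) y = -η x (I y)`. Together these show `⟪I (A x), y⟫ = η (I x) y`, a symmetric form in
`x, y`, so `I ∘ A` is self-adjoint. The same identities for `J`, with `I J = -J I`, show that `J`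
anticommutes with `I ∘ A`; being injective, `J` then maps the `μ`-eigenvectors of `I ∘ A` to
`-μ`-eigenvectors.
-/

theorem LinearMap.apply_left_eq_neg_apply_right_of_invariant {R M : Type*} [CommRing R]
    [AddCommGroup M] [Module R M] {η : M →ₗ[R] M →ₗ[R] R} {L : M →ₗ[R] M}
    (hinv : ∀ x y, η (L x) (L y) = η x y) (hL2 : ∀ x, L (L x) = -x) (x y : M) :
    η (L x) y = -η x (L y) := by
  rw [← hinv, hL2, map_neg, LinearMap.neg_apply]

theorem Module.End.HasEigenvalue.neg_of_anticomm_of_injective {R M : Type*} [CommRing R]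
    [AddCommGroup M] [Module R M] {f g : Module.End R M} (hfg : ∀ x, f (g x) = -g (f x))
    (hg : Function.Injective g) {μ : R} (hμ : f.HasEigenvalue μ) : f.HasEigenvalue (-μ) := by
  obtain ⟨v, hv, hv0⟩ := hμ.exists_hasEigenvector
  have hgv : f (g v) = (-μ) • g v := by
    rw [hfg, Module.End.mem_eigenspace_iff.mp hv, map_smul, neg_smul]
  exact Module.End.hasEigenvalue_of_hasEigenvector
    ⟨Module.End.mem_eigenspace_iff.mpr hgv, (map_ne_zero_iff g hg).mpr hv0⟩

section

variable {V : Type*} [NormedAddCommGroup V] [InnerProductSpace ℝ V]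

theorem inner_apply_left_eq_neg_inner_apply_right {L : V →ₗ[ℝ] V}
    (hiso : ∀ x y : V, ⟪L x, L y⟫ = ⟪x, y⟫) (hL2 : ∀ x : V, L (L x) = -x) (x y : V) :
    ⟪L x, y⟫ = -⟪x, L y⟫ :=
  LinearMap.apply_left_eq_neg_apply_right_of_invariant (η := innerₗ V) hiso hL2 x y

variable {I : V →ₗ[ℝ] V} {η : V →ₗ[ℝ] V →ₗ[ℝ] ℝ} {A : V →ₗ[ℝ] V}

theorem inner_comp_apply_eq_of_invariant (hIskew : ∀ x y : V, ⟪I x, y⟫ = -⟪x, I y⟫)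
    (hηI : ∀ x y : V, η (I x) y = -η x (I y)) (hA : ∀ x y : V, ⟪A x, y⟫ = η x y) (x y : V) :
    ⟪(I ∘ₗ A) x, y⟫ = η (I x) y := by
  rw [LinearMap.comp_apply, hIskew, hA, hηI]

theorem isSymmetric_comp_of_invariant (halt : η.IsAlt) (hIskew : ∀ x y : V, ⟪I x, y⟫ = -⟪x, I y⟫)
    (hηI : ∀ x y : V, η (I x) y = -η x (I y)) (hA : ∀ x y : V, ⟪A x, y⟫ = η x y) :
    (I ∘ₗ A).IsSymmetric := by
  intro x y
  rw [inner_comp_apply_eq_of_invariant hIskew hηI hA, real_inner_comm,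
    inner_comp_apply_eq_of_invariant hIskew hηI hA, hηI, ← halt.neg, neg_neg]

theorem comp_apply_anticomm_of_invariant {J : V →ₗ[ℝ] V}
    (hIskew : ∀ x y : V, ⟪I x, y⟫ = -⟪x, I y⟫) (hJskew : ∀ x y : V, ⟪J x, y⟫ = -⟪x, J y⟫)
    (hIJ : ∀ x : V, I (J x) = -(J (I x))) (hηI : ∀ x y : V, η (I x) y = -η x (I y))
    (hηJ : ∀ x y : V, η (J x) y = -η x (J y)) (hA : ∀ x y : V, ⟪A x, y⟫ = η x y) (x : V) :
    (I ∘ₗ A) (J x) = -J ((I ∘ₗ A) x) := by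
  refine ext_inner_right ℝ fun y => ?_
  rw [inner_comp_apply_eq_of_invariant hIskew hηI hA, inner_neg_left, hJskew,
    inner_comp_apply_eq_of_invariant hIskew hηI hA, hIJ, map_neg, LinearMap.neg_apply, hηJ,
    neg_neg]

end

theorem eigenvalues_of_su2_invariant_form_pair_general
    {V : Type*} [NormedAddCommGroup V] [InnerProductSpace ℝ V]
    (I J K : V →ₗ[ℝ] V)
    (hIiso : ∀ x y : V, ⟪I x, I y⟫ = ⟪x, y⟫)
    (hJiso : ∀ x y : V, ⟪J x, J y⟫ = ⟪x, y⟫)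
    (hI2 : ∀ x : V, I (I x) = -x)
    (hJ2 : ∀ x : V, J (J x) = -x)
    (hIJ : ∀ x : V, I (J x) = -(J (I x)))
    (η : V →ₗ[ℝ] V →ₗ[ℝ] ℝ)
    (halt : ∀ x : V, η x x = 0)
    (hSU2 : ∀ x y : V,
      η (I x) (I y) = η x y ∧ η (J x) (J y) = η x y ∧ η (K x) (K y) = η x y)
    (A : V →ₗ[ℝ] V)
    (hA : ∀ x y : V, ⟪A x, y⟫ = η x y) :
    (I ∘ₗ A).IsSymmetric ∧
      ∀ μ : ℝ, Module.End.HasEigenvalue (I ∘ₗ A) μ ↔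
        Module.End.HasEigenvalue (I ∘ₗ A) (-μ) := by
  have hIskew := inner_apply_left_eq_neg_inner_apply_right hIiso hI2
  have hJskew := inner_apply_left_eq_neg_inner_apply_right hJiso hJ2
  have hηI := LinearMap.apply_left_eq_neg_apply_right_of_invariant (fun x y => (hSU2 x y).1) hI2
  have hηJ :=
    LinearMap.apply_left_eq_neg_apply_right_of_invariant (fun x y => (hSU2 x y).2.1) hJ2
  have hanti := comp_apply_anticomm_of_invariant hIskew hJskew hIJ hηI hηJ hA
  have hJinj : Function.Injective J := fun a b hab => by simpa [hJ2] using congrArg J hab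
  refine ⟨isSymmetric_comp_of_invariant halt hIskew hηI hA, fun μ => ⟨fun h => ?_, fun h => ?_⟩⟩
  · exact h.neg_of_anticomm_of_injective hanti hJinj
  · simpa using h.neg_of_anticomm_of_injective hanti hJinj

/-- On a quaternionic Hermitian vector space, the endomorphism `I ∘ A`
associated to an `SU(2)`-invariant alternating bilinear form `η` (via `⟪A x, y⟫ = η x y`)
is self-adjoint and its eigenvalues occur in pairs `σ, -σ`. -/
theorem eigenvalues_of_su2_invariant_form_pair
    {V : Type*} [NormedAddCommGroup V] [InnerProductSpace ℝ V] [FiniteDimensional ℝ V]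
    (I J K : V →ₗ[ℝ] V)
    (hIiso : ∀ x y : V, ⟪I x, I y⟫ = ⟪x, y⟫)
    (hJiso : ∀ x y : V, ⟪J x, J y⟫ = ⟪x, y⟫)
    (hKiso : ∀ x y : V, ⟪K x, K y⟫ = ⟪x, y⟫)
    (hI2 : ∀ x : V, I (I x) = -x)
    (hJ2 : ∀ x : V, J (J x) = -x)
    (hIJ : ∀ x : V, I (J x) = -(J (I x)))
    (hK : ∀ x : V, K x = I (J x))
    (η : V →ₗ[ℝ] V →ₗ[ℝ] ℝ)
    (halt : ∀ x : V, η x x = 0)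
    (hSU2 : ∀ x y : V,
      η (I x) (I y) = η x y ∧ η (J x) (J y) = η x y ∧ η (K x) (K y) = η x y)
    (A : V →ₗ[ℝ] V)
    (hA : ∀ x y : V, ⟪A x, y⟫ = η x y) :
    (I ∘ₗ A).IsSymmetric ∧
      ∀ μ : ℝ, Module.End.HasEigenvalue (I ∘ₗ A) μ ↔
        Module.End.HasEigenvalue (I ∘ₗ A) (-μ) :=
  eigenvalues_of_su2_invariant_form_pair_general I J K hIiso hJiso hI2 hJ2 hIJ η halt hSU2 A hA
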